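/- Assume the Continuum Hypothesis, i.e. 2^ℵ₀ = ℵ₁. Then there exists a set F of entire functions (functions ℂ → ℂ analytic on all of ℂ) of cardinality 2^ℵ₀ (the cardinality of the continuum) such that for every point z ∈ ℂ the set of values {f(z) : f ∈ F} is countable. -/

import Mathlib

/-!
Enumerate `ℂ` along `ω₁`, which CH makes possible, as `(z_α)_{α < ω₁}`, and fix a countable
dense set `D ⊆ ℂ`. By transfinite recursion choose entire functions `f_α`, distinct from all
`f_β` with `β < α`, such that `f_α(z_β) ∈ D` for every `β < α`. At a point `z = z_β` the values
`f_α(z)` then lie in `D` except for the countably many `α ≤ β`.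

A single step is Newton interpolation at an injective enumeration `w` of the countably many
nodes: the coefficients `c_n` of `∑ c_n ∏_{k<n} (z - w_k)` are chosen one at a time, so small
that the series converges locally uniformly, yet such that the value at `w_n`, which only
`c_0, …, c_n` affect, lands in `D` and differs from the `n`-th function to be avoided.
-/

open Cardinal Function Set Filter

theorem Set.Countable.exists_injective_subset_range {α : Type*} [Infinite α] {s : Set α}
    (hs : s.Countable) : ∃ w : ℕ → α, Injective w ∧ s ⊆ range w := by
  set t := s ∪ range (_root_.Infinite.natEmbedding α)
  have : Countable t := (hs.union (countable_range _)).to_subtype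
  have : Infinite t :=
    ((infinite_range_of_injective (_root_.Infinite.natEmbedding α).injective).mono
      subset_union_right).to_subtype
  obtain ⟨_⟩ := nonempty_denumerable t
  let e : ℕ ≃ t := (Denumerable.eqv t).symm
  refine ⟨fun n => e n, Subtype.val_injective.comp e.injective, fun x hx => ?_⟩
  exact ⟨e.symm ⟨x, subset_union_left hx⟩, by simp⟩

theorem Dense.exists_norm_lt_add_mul_mem {𝕜 : Type*} [NormedField 𝕜] {D : Set 𝕜} (hD : Dense D)
    (s : 𝕜) {q : 𝕜} (hq : q ≠ 0) {ε : ℝ} (hε : 0 < ε) : ∃ c : 𝕜, ‖c‖ < ε ∧ s + c * q ∈ D := by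
  obtain ⟨d, hds, hd⟩ := Metric.dense_iff.1 hD s (ε * ‖q‖) (by positivity)
  refine ⟨(d - s) / q, ?_, by rwa [div_mul_cancel₀ _ hq, add_sub_cancel]⟩
  rw [norm_div, div_lt_iff₀ (norm_pos_iff.2 hq), ← dist_eq_norm]
  exact hds

theorem differentiable_tsum_of_eventually_norm_le {ι E : Type*} [NormedAddCommGroup E]
    [NormedSpace ℂ E] [CompleteSpace E] {u : ι → ℂ → E} {b : ι → ℝ} (hb : Summable b)
    (hu : ∀ i, Differentiable ℂ (u i))
    (hle : ∀ R : ℝ, ∀ᶠ i in cofinite, ∀ z : ℂ, ‖z‖ ≤ R → ‖u i z‖ ≤ b i) :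
    Differentiable ℂ fun z => ∑' i, u i z := by
  rw [← differentiableOn_univ]
  refine TendstoLocallyUniformlyOn.differentiableOn (F := fun t z => ∑ i ∈ t, u i z) ?_
    (.of_forall (f := atTop) fun t => (Differentiable.fun_sum fun i _ => hu i).differentiableOn)
    isOpen_univ
  rw [tendstoLocallyUniformlyOn_iff_forall_isCompact isOpen_univ]
  intro K _ hK
  obtain ⟨R, hR⟩ := hK.isBounded.subset_closedBall 0
  refine tendstoUniformlyOn_tsum_of_cofinite_eventually hb ?_
  filter_upwards [hle R] with i hi z hz
  exact hi z (by simpa using hR hz)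

section Newton

variable {𝕜 : Type*} [NontriviallyNormedField 𝕜] (w : ℕ → 𝕜)

def newtonBasis (n : ℕ) (z : 𝕜) : 𝕜 := ∏ k ∈ Finset.range n, (z - w k)

theorem newtonBasis_apply_eq_zero {m n : ℕ} (h : n < m) : newtonBasis w m (w n) = 0 :=
  Finset.prod_eq_zero (Finset.mem_range.2 h) (sub_self _)

theorem newtonBasis_apply_self_ne_zero {w : ℕ → 𝕜} (hw : Injective w) (n : ℕ) :
    newtonBasis w n (w n) ≠ 0 :=
  Finset.prod_ne_zero_iff.2 fun _ hk => sub_ne_zero.2 (hw.ne (Finset.mem_range.1 hk).ne')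

theorem norm_newtonBasis_le (n : ℕ) {z : 𝕜} {r : ℝ} (hz : ‖z‖ ≤ r) :
    ‖newtonBasis w n z‖ ≤ ∏ k ∈ Finset.range n, (r + ‖w k‖) := by
  rw [newtonBasis, norm_prod]
  gcongr with k
  exact (norm_sub_le _ _).trans (by gcongr)

theorem differentiable_newtonBasis (n : ℕ) : Differentiable 𝕜 (newtonBasis w n) :=
  Differentiable.fun_finsetProd fun k _ => differentiable_id.sub_const (w k)

/-- The `n`-th coefficient is `c n s`, where `s` is the value of the previous partial sum at the
new node `w n`. -/
def newtonPartialSum (c : ℕ → 𝕜 → 𝕜) : ℕ → 𝕜 → 𝕜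
  | 0 => 0
  | n + 1 => fun z =>
    newtonPartialSum c n z + c n (newtonPartialSum c n (w n)) * newtonBasis w n z

def newtonCoeff (c : ℕ → 𝕜 → 𝕜) (n : ℕ) : 𝕜 := c n (newtonPartialSum w c n (w n))

theorem newtonPartialSum_eq_sum (c : ℕ → 𝕜 → 𝕜) (N : ℕ) (z : 𝕜) :
    newtonPartialSum w c N z = ∑ m ∈ Finset.range N, newtonCoeff w c m * newtonBasis w m z := by
  induction N with
  | zero => rfl
  | succ N ih => rw [Finset.sum_range_succ, ← ih]; rfl

theorem tsum_newtonCoeff_mul_newtonBasis_apply (c : ℕ → 𝕜 → 𝕜) (n : ℕ) :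
    ∑' m, newtonCoeff w c m * newtonBasis w m (w n) = newtonPartialSum w c (n + 1) (w n) := by
  rw [newtonPartialSum_eq_sum, tsum_eq_sum]
  intro m hm
  rw [newtonBasis_apply_eq_zero w (by simpa using hm), mul_zero]

end Newton

theorem exists_differentiable_forall_apply_mem {w : ℕ → ℂ} (hw : Injective w) {D : ℕ → Set ℂ}
    (hD : ∀ n, Dense (D n)) : ∃ f : ℂ → ℂ, Differentiable ℂ f ∧ ∀ n, f (w n) ∈ D n := by
  -- `M n` bounds `newtonBasis w n` on the disc of radius `n + 1`.
  set M : ℕ → ℝ := fun n => ∏ k ∈ Finset.range n, ((n : ℝ) + 1 + ‖w k‖)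
  have hM : ∀ n, 0 < M n := fun n => Finset.prod_pos fun k _ => by positivity
  have hstep : ∀ n s, ∃ c : ℂ, ‖c‖ < (1 / 2) ^ n / M n ∧ s + c * newtonBasis w n (w n) ∈ D n :=
    fun n s => (hD n).exists_norm_lt_add_mul_mem s (newtonBasis_apply_self_ne_zero hw n)
      (div_pos (by positivity) (hM n))
  choose c hc_small hc_mem using hstep
  refine ⟨fun z => ∑' m, newtonCoeff w c m * newtonBasis w m z, ?_, fun n => ?_⟩
  · refine differentiable_tsum_of_eventually_norm_le summable_geometric_two
      (fun m => (differentiable_newtonBasis w m).const_mul _) fun R => ?_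
    rw [Nat.cofinite_eq_atTop]
    filter_upwards [eventually_ge_atTop ⌈R⌉₊] with n hn z hz
    have hzn : ‖z‖ ≤ n + 1 := by
      linarith [Nat.le_ceil R, (Nat.cast_le (α := ℝ)).2 hn]
    calc ‖newtonCoeff w c n * newtonBasis w n z‖
        ≤ (1 / 2) ^ n / M n * M n := by
          rw [norm_mul]
          gcongr
          exacts [(hc_small _ _).le, norm_newtonBasis_le w n hzn]
      _ = (1 / 2) ^ n := div_mul_cancel₀ _ (hM n).ne'
  · dsimp only
    rw [tsum_newtonCoeff_mul_newtonBasis_apply]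
    exact hc_mem n _

theorem exists_differentiable_mapsTo_notMem {D : Set ℂ} (hD : Dense D) {S : Set ℂ}
    (hS : S.Countable) {G : Set (ℂ → ℂ)} (hG : G.Countable) :
    ∃ f : ℂ → ℂ, Differentiable ℂ f ∧ MapsTo f S D ∧ f ∉ G := by
  obtain ⟨w, hw, hSw⟩ := hS.exists_injective_subset_range
  obtain ⟨g, hGg⟩ := countable_iff_exists_subset_range.1 hG
  obtain ⟨f, hf, hfw⟩ :=
    exists_differentiable_forall_apply_mem hw fun n => hD.sdiff_singleton (g n (w n))
  refine ⟨f, hf, fun z hz => ?_, fun hfG => ?_⟩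
  · obtain ⟨n, rfl⟩ := hSw hz
    exact (hfw n).1
  · obtain ⟨n, rfl⟩ := hGg hfG
    exact (hfw n).2 rfl

theorem exists_injective_forall_lt_apply_mem {ι X Y : Type*} [LinearOrder ι] [WellFoundedLT ι]
    (hι : ∀ i : ι, (Iio i).Countable) (e : ι → X) {P : (X → Y) → Prop} {D : Set Y}
    (hP : ∀ S : Set X, S.Countable → ∀ G : Set (X → Y), G.Countable →
      ∃ f, P f ∧ MapsTo f S D ∧ f ∉ G) :
    ∃ Φ : ι → X → Y, Injective Φ ∧ (∀ i, P (Φ i)) ∧ ∀ i j, j < i → Φ i (e j) ∈ D := by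
  have hG (i : ι) (p : ∀ j < i, X → Y) : (range fun j : Iio i => p j j.2).Countable :=
    have := (hι i).to_subtype
    countable_range _
  choose step hstep using fun i p => hP _ ((hι i).image e) _ (hG i p)
  let Φ : ι → X → Y := wellFounded_lt.fix step
  have hΦ (i : ι) :
      P (Φ i) ∧ MapsTo (Φ i) (e '' Iio i) D ∧ Φ i ∉ range fun j : Iio i => Φ j := by
    rw [show Φ i = step i fun j _ => Φ j from wellFounded_lt.fix_eq step i]
    exact hstep i _
  exact ⟨Φ, .of_lt_imp_ne fun i j h hij => (hΦ j).2.2 ⟨⟨i, h⟩, hij⟩, fun i => (hΦ i).1,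
    fun i j h => (hΦ i).2.1 (mem_image_of_mem e h)⟩

theorem countable_image_eval_range {ι X Y : Type*} [LinearOrder ι] {Φ : ι → X → Y} {e : ι → X}
    {D : Set Y} (hD : D.Countable) (hΦ : ∀ i j, j < i → Φ i (e j) ∈ D) {x : ι}
    (hx : (Iic x).Countable) : ((fun f => f (e x)) '' range Φ).Countable := by
  refine (hD.union (hx.image fun i => Φ i (e x))).mono ?_
  rintro _ ⟨_, ⟨i, rfl⟩, rfl⟩
  rcases le_or_gt i x with h | h
  exacts [Or.inr ⟨i, h, rfl⟩, Or.inl (hΦ i x h)]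

theorem countable_Iio_toType_ord_aleph_one (i : (ℵ₁ : Cardinal).ord.ToType) :
    (Iio i).Countable := by
  refine le_aleph0_iff_set_countable.1 (lt_aleph_one_iff.1 ?_)
  simpa using mk_Iio_lt i (by rw [mk_ord_toType, Ordinal.type_toType])

/-- Assuming the Continuum Hypothesis, there is a family of entire functions of
cardinality `2 ^ ℵ₀` (the continuum) whose set of values at each point of `ℂ`
is countable. -/
theorem exists_continuum_family_of_CH
    (hCH : (2 : Cardinal) ^ Cardinal.aleph0 = Cardinal.aleph 1) :
    ∃ F : Set (ℂ → ℂ),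
      (∀ f ∈ F, Differentiable ℂ f) ∧
      Cardinal.mk F = 2 ^ Cardinal.aleph0 ∧
      ∀ z : ℂ, ((fun f : ℂ → ℂ => f z) '' F).Countable := by
  have hCH₀ : (2 : Cardinal.{0}) ^ ℵ₀ = ℵ₁ := lift_injective (by simpa using hCH)
  let ι := (ℵ₁ : Cardinal.{0}).ord.ToType
  have hι : #ι = 2 ^ ℵ₀ := (mk_ord_toType _).trans hCH₀.symm
  obtain ⟨e⟩ : Nonempty (ι ≃ ℂ) := Cardinal.eq.1 (by rw [hι, mk_complex, two_power_aleph0])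
  obtain ⟨D, hDc, hD⟩ := TopologicalSpace.exists_countable_dense ℂ
  obtain ⟨Φ, hΦinj, hΦdiff, hΦD⟩ :=
    exists_injective_forall_lt_apply_mem countable_Iio_toType_ord_aleph_one e
      fun S hS G hG => exists_differentiable_mapsTo_notMem hD hS hG
  refine ⟨range Φ, forall_mem_range.2 hΦdiff, by rw [mk_range_eq Φ hΦinj, hι], fun z => ?_⟩
  rw [← e.apply_symm_apply z]
  exact countable_image_eval_range hDc hΦD
    (Iio_insert (a := e.symm z) ▸ (countable_Iio_toType_ord_aleph_one _).insert _)
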